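/- Let n ≥ 3 be an integer, 0 < m < (n-2)/n, ρ₁ > 0, λ > 0, β = β₁ = ρ₁/(n-2-nm) and α = (2β+ρ₁)/(1-m) (so that nβ = α). Let g_λ be a radially symmetric solution of Δv^m + αv + βx·∇v = 0, v > 0, in ℝ^n∖{0} satisfying lim_{r→0+} r^{α/β} g_λ(r) = λ^{-ρ₁/((1-m)β)}. Then r^{n-1}(g_λ^m)'(r) + β r^n g_λ(r) = β λ^{-ρ₁/((1-m)β)} for all r > 0. -/

import Mathlib

/-
Because `α = nβ`, the radial equation is in divergence form: the flux
`F(r) = r^{n-1} (g^m)'(r) + β rⁿ g(r)` is constant, say `c`. As `rⁿ g(r) → ℓ := λ^{-ρ₁/((1-m)β)}`,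
the first term of the flux tends to `d := c - βℓ`. L'Hôpital's rule against `r^{2-n} → ∞` then gives
`r^{n-2} g^m → d / (2-n)`, while `r^{n-2} g^m = r^{n-2-nm} (rⁿ g)^m → 0` because `nm < n-2`.
Hence `d = 0`.
-/
open Real Filter Set

noncomputable section

/-- A radially symmetric solution of `Δ v^m + α v + β x·∇v = 0`, `v > 0`, in `ℝⁿ \ {0}`,
identified with a smooth positive function on `(0,∞)` satisfying the radial ODE. -/
def IsSingularSolution (n : ℕ) (m α β : ℝ) (g : ℝ → ℝ) : Prop :=
  (∀ r > 0, 0 < g r) ∧ ContDiffOn ℝ (⊤ : ℕ∞) g (Ioi 0) ∧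
    ∀ r > 0,
      deriv (deriv (fun x => g x ^ m)) r
        + (((n : ℝ) - 1) / r) * deriv (fun x => g x ^ m) r
        + α * g r + β * r * deriv g r = 0

open Topology

section LHopital

variable {f f' g g' : ℝ → ℝ} {a : ℝ}

lemma eventually_div_lt_of_eventually_deriv_div_lt {u v : ℝ} (huv : u < v)
    (hff' : ∀ᶠ x in 𝓝[>] a, HasDerivAt f (f' x) x)
    (hgg' : ∀ᶠ x in 𝓝[>] a, HasDerivAt g (g' x) x)
    (hg' : ∀ᶠ x in 𝓝[>] a, g' x ≠ 0)
    (hg : Tendsto g (𝓝[>] a) atTop)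
    (hdiv : ∀ᶠ x in 𝓝[>] a, f' x / g' x < u) :
    ∀ᶠ x in 𝓝[>] a, f x / g x < v := by
  obtain ⟨b, hab, hb⟩ :=
    mem_nhdsGT_iff_exists_Ioo_subset.1 (hff'.and (hgg'.and (hg'.and hdiv)))
  obtain ⟨s, has, hsb⟩ := exists_between (α := ℝ) hab
  have hslope : ∀ x ∈ Ioo a s, g s < g x → f x - f s < (g x - g s) * u := by
    intro x hx hgx
    have hsub : Icc x s ⊆ Ioo a b := Icc_subset_Ioo hx.1 hsb
    obtain ⟨c, hc, hmvt⟩ := exists_ratio_hasDerivAt_eq_ratio_slope f f' hx.2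
      (fun y hy => (hb (hsub hy)).1.continuousAt.continuousWithinAt)
      (fun y hy => (hb (hsub (Ioo_subset_Icc_self hy))).1) g g'
      (fun y hy => (hb (hsub hy)).2.1.continuousAt.continuousWithinAt)
      (fun y hy => (hb (hsub (Ioo_subset_Icc_self hy))).2.1)
    obtain ⟨-, -, hgc, hc_lt⟩ := hb (hsub (Ioo_subset_Icc_self hc))
    have hquot : f x - f s = (g x - g s) * (f' c / g' c) := by
      field_simp
      linarith
    rw [hquot]
    exact mul_lt_mul_of_pos_left hc_lt (sub_pos.2 hgx)
  have hrest : Tendsto (fun x => (f s - u * g s) / g x) (𝓝[>] a) (𝓝 0) :=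
    tendsto_const_nhds.div_atTop hg
  filter_upwards [Ioo_mem_nhdsGT has, hg.eventually_gt_atTop (max (g s) 0),
    hrest.eventually (gt_mem_nhds (sub_pos.2 huv))] with x hx hgx hsmall
  have hgx0 : 0 < g x := (le_max_right _ _).trans_lt hgx
  rw [div_lt_iff₀ hgx0] at hsmall ⊢
  linarith [hslope x hx ((le_max_left _ _).trans_lt hgx)]

theorem HasDerivAt.lhopital_of_tendsto_atTop_nhdsGT {l : ℝ}
    (hff' : ∀ᶠ x in 𝓝[>] a, HasDerivAt f (f' x) x)
    (hgg' : ∀ᶠ x in 𝓝[>] a, HasDerivAt g (g' x) x)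
    (hg' : ∀ᶠ x in 𝓝[>] a, g' x ≠ 0)
    (hg : Tendsto g (𝓝[>] a) atTop)
    (hdiv : Tendsto (fun x => f' x / g' x) (𝓝[>] a) (𝓝 l)) :
    Tendsto (fun x => f x / g x) (𝓝[>] a) (𝓝 l) := by
  refine tendsto_order.2 ⟨fun v hv => ?_, fun v hv => ?_⟩
  · obtain ⟨u, hvu, hul⟩ := exists_between hv
    have hneg := eventually_div_lt_of_eventually_deriv_div_lt (f := -f) (f' := -f')
      (neg_lt_neg hvu) (hff'.mono fun x hx => hx.neg) hgg' hg' hg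
      ((hdiv.eventually (lt_mem_nhds hul)).mono fun x hx => by
        simpa [neg_div] using hx)
    filter_upwards [hneg] with x hx
    simp only [Pi.neg_apply, neg_div] at hx
    linarith
  · obtain ⟨u, hlu, huv⟩ := exists_between hv
    exact eventually_div_lt_of_eventually_deriv_div_lt huv hff' hgg' hg' hg
      (hdiv.eventually (gt_mem_nhds hlu))

end LHopital

theorem tendsto_rpow_mul_of_tendsto_rpow_mul_deriv {h : ℝ → ℝ} {N d : ℝ} (hN : 2 < N)
    (hh : ∀ᶠ x in 𝓝[>] 0, DifferentiableAt ℝ h x)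
    (hd : Tendsto (fun x => x ^ (N - 1) * deriv h x) (𝓝[>] 0) (𝓝 d)) :
    Tendsto (fun x => x ^ (N - 2) * h x) (𝓝[>] 0) (𝓝 (d / (2 - N))) := by
  have hpos : ∀ᶠ x in 𝓝[>] (0 : ℝ), 0 < x := self_mem_nhdsWithin
  have hquot := HasDerivAt.lhopital_of_tendsto_atTop_nhdsGT (hh.mono fun x hx => hx.hasDerivAt)
    (g' := fun x => (2 - N) * x ^ (2 - N - 1))
    (hpos.mono fun x hx => hasDerivAt_rpow_const (Or.inl hx.ne'))
    (hpos.mono fun x hx => mul_ne_zero (by linarith) (rpow_pos_of_pos hx _).ne')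
    (tendsto_rpow_neg_nhdsGT_zero (by linarith))
    ((hd.div_const (2 - N)).congr' (hpos.mono fun x hx => by
      simp only [show 2 - N - 1 = -(N - 1) by ring, rpow_neg hx.le]
      have := (rpow_pos_of_pos hx (N - 1)).ne'
      have : 2 - N ≠ 0 := by linarith
      field_simp))
  refine hquot.congr' (hpos.mono fun x hx => ?_)
  simp only [show 2 - N = -(N - 2) by ring, rpow_neg hx.le]
  field_simp

theorem tendsto_rpow_mul_rpow_nhdsGT_zero {g : ℝ → ℝ} {N m p L : ℝ} (hm : 0 ≤ m)
    (hp : N * m < p) (hg : ∀ x > 0, 0 ≤ g x)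
    (hlim : Tendsto (fun x => x ^ N * g x) (𝓝[>] 0) (𝓝 L)) :
    Tendsto (fun x => x ^ p * g x ^ m) (𝓝[>] 0) (𝓝 0) := by
  have hpow : Tendsto (fun x : ℝ => x ^ (p - N * m)) (𝓝[>] 0) (𝓝 0) := by
    simpa [zero_rpow (sub_pos.2 hp).ne'] using
      (continuousAt_rpow_const 0 _ (Or.inr (sub_pos.2 hp).le)).tendsto.mono_left
        nhdsWithin_le_nhds
  have hprod := hpow.mul (hlim.rpow_const (Or.inr hm))
  rw [zero_mul] at hprod
  refine hprod.congr' (eventually_mem_nhdsWithin.mono fun x (hx : 0 < x) => ?_)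
  rw [mul_rpow (rpow_nonneg hx.le _) (hg x hx), ← rpow_mul hx.le, ← mul_assoc, ← rpow_add hx,
    sub_add_cancel]

def radialFlux (n : ℕ) (m β : ℝ) (g : ℝ → ℝ) (r : ℝ) : ℝ :=
  r ^ ((n : ℝ) - 1) * deriv (fun x => g x ^ m) r + β * r ^ (n : ℝ) * g r

namespace IsSingularSolution

variable {n : ℕ} {m α β : ℝ} {g : ℝ → ℝ}

theorem contDiffOn_rpow (hg : IsSingularSolution n m α β g) :
    ContDiffOn ℝ (⊤ : ℕ∞) (fun x => g x ^ m) (Ioi 0) :=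
  hg.2.1.rpow_const_of_ne fun x hx => (hg.1 x hx).ne'

theorem differentiableAt_rpow (hg : IsSingularSolution n m α β g) {r : ℝ} (hr : 0 < r) :
    DifferentiableAt ℝ (fun x => g x ^ m) r :=
  (hg.contDiffOn_rpow.contDiffAt (Ioi_mem_nhds hr)).differentiableAt (by simp)

theorem differentiableAt_deriv_rpow (hg : IsSingularSolution n m α β g) {r : ℝ} (hr : 0 < r) :
    DifferentiableAt ℝ (deriv fun x => g x ^ m) r :=
  ((hg.contDiffOn_rpow.deriv_of_isOpen isOpen_Ioi (m := 1)
    (WithTop.coe_le_coe.2 le_top)).contDiffAt (Ioi_mem_nhds hr)).differentiableAt (by simp)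

-- With `α = nβ` the radial equation is in divergence form.
theorem hasDerivAt_radialFlux (hg : IsSingularSolution n m (n * β) β g) {r : ℝ} (hr : 0 < r) :
    HasDerivAt (radialFlux n m β g) 0 r := by
  have hg' : DifferentiableAt ℝ g r :=
    (hg.2.1.contDiffAt (Ioi_mem_nhds hr)).differentiableAt (by simp)
  refine (((hasDerivAt_rpow_const (p := (n : ℝ) - 1) (Or.inl hr.ne')).mul
    (hg.differentiableAt_deriv_rpow hr).hasDerivAt).add
    (((hasDerivAt_rpow_const (p := (n : ℝ)) (Or.inl hr.ne')).const_mul β).mul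
      hg'.hasDerivAt)).congr_deriv ?_
  have hsub : r ^ ((n : ℝ) - 1 - 1) = r ^ ((n : ℝ) - 1) / r := by
    rw [rpow_sub hr, rpow_one]
  have hadd : r ^ (n : ℝ) = r ^ ((n : ℝ) - 1) * r := by
    rw [← rpow_add_one hr.ne', sub_add_cancel]
  rw [hsub, hadd]
  linear_combination r ^ ((n : ℝ) - 1) * hg.2.2 r hr

theorem exists_radialFlux_eq (hg : IsSingularSolution n m (n * β) β g) :
    ∃ c, ∀ r > 0, radialFlux n m β g r = c :=
  isOpen_Ioi.exists_is_const_of_deriv_eq_zero isPreconnected_Ioi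
    (fun _ hr => (hg.hasDerivAt_radialFlux hr).differentiableAt.differentiableWithinAt)
    (fun _ hr => (hg.hasDerivAt_radialFlux hr).deriv)

end IsSingularSolution

theorem stmt9_general (n : ℕ) (m ρ₁ lam β α : ℝ)
    (hn : 3 ≤ n) (hm : 0 < m) (hm2 : m < ((n : ℝ) - 2) / n)
    (hρ : 0 < ρ₁)
    (hβ : β = ρ₁ / ((n : ℝ) - 2 - n * m))
    (hα : α = (2 * β + ρ₁) / (1 - m))
    (g : ℝ → ℝ)
    (hg : IsSingularSolution n m α β g)
    (hlim : Tendsto (fun r => r ^ (α / β) * g r) (nhdsWithin 0 (Ioi 0))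
      (nhds (lam ^ (-(ρ₁ / ((1 - m) * β)))))) :
    ∀ r > 0,
      r ^ ((n : ℝ) - 1) * deriv (fun x => g x ^ m) r + β * r ^ (n : ℝ) * g r =
        β * lam ^ (-(ρ₁ / ((1 - m) * β))) := by
  set L := lam ^ (-(ρ₁ / ((1 - m) * β)))
  have hn3 : (3 : ℝ) ≤ n := by exact_mod_cast hn
  have hgap : 0 < (n : ℝ) - 2 - n * m := by
    have := (lt_div_iff₀ (by linarith : (0 : ℝ) < n)).1 hm2
    linarith
  have hβ0 : β ≠ 0 := hβ ▸ div_ne_zero hρ.ne' hgap.ne'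
  have hρβ : ρ₁ = β * ((n : ℝ) - 2 - n * m) := by rw [hβ]; field_simp
  have hαβ : α = n * β := by
    rw [hα, hρβ, div_eq_iff (by nlinarith)]
    ring
  rw [hαβ] at hg
  rw [hαβ, mul_div_cancel_right₀ _ hβ0] at hlim
  obtain ⟨c, hc⟩ := hg.exists_radialFlux_eq
  have hderiv : Tendsto (fun r => r ^ ((n : ℝ) - 1) * deriv (fun x => g x ^ m) r) (𝓝[>] 0)
      (𝓝 (c - β * L)) :=
    (tendsto_const_nhds.sub (hlim.const_mul β)).congr'
      (eventually_mem_nhdsWithin.mono fun r hr => by rw [← hc r hr, radialFlux]; ring)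
  have hscaled : Tendsto (fun r => r ^ ((n : ℝ) - 2) * g r ^ m) (𝓝[>] 0) (𝓝 0) :=
    tendsto_rpow_mul_rpow_nhdsGT_zero hm.le (by linarith) (fun r hr => (hg.1 r hr).le) hlim
  have hcL : (c - β * L) / (2 - n) = 0 :=
    tendsto_nhds_unique (tendsto_rpow_mul_of_tendsto_rpow_mul_deriv (by linarith)
      (eventually_mem_nhdsWithin.mono fun r hr => hg.differentiableAt_rpow hr) hderiv) hscaled
  rw [div_eq_zero_iff, sub_eq_zero] at hcL
  intro r hr
  exact (hc r hr).trans (hcL.resolve_right (by linarith))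

/-- for `β = β₁ = ρ₁/(n-2-nm)` (so `nβ = α`), the singular solution with
the prescribed blow-up rate satisfies
`r^{n-1}(g^m)'(r) + β rⁿ g(r) = β λ^{-ρ₁/((1-m)β)}` for all `r > 0`. -/
theorem stmt9 (n : ℕ) (m ρ₁ lam β α : ℝ)
    (hn : 3 ≤ n) (hm : 0 < m) (hm2 : m < ((n : ℝ) - 2) / n)
    (hρ : 0 < ρ₁) (hlam : 0 < lam)
    (hβ : β = ρ₁ / ((n : ℝ) - 2 - n * m))
    (hα : α = (2 * β + ρ₁) / (1 - m))
    (g : ℝ → ℝ)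
    (hg : IsSingularSolution n m α β g)
    (hlim : Tendsto (fun r => r ^ (α / β) * g r) (nhdsWithin 0 (Ioi 0))
      (nhds (lam ^ (-(ρ₁ / ((1 - m) * β)))))) :
    ∀ r > 0,
      r ^ ((n : ℝ) - 1) * deriv (fun x => g x ^ m) r + β * r ^ (n : ℝ) * g r =
        β * lam ^ (-(ρ₁ / ((1 - m) * β))) :=
  stmt9_general n m ρ₁ lam β α hn hm hm2 hρ hβ hα g hg hlim
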